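/- arXiv:2202.08179 — 6 statements merged into one kernel-verified Lean document; each statement's English description precedes it below -/
import Mathlib

section
/- Let h : ℝ → (0,∞) be twice differentiable and let ũ : ℝ² → ℂ be twice continuously differentiable. Define u(x,y) = ũ(x, h(x)·y). Then u is twice differentiable and for all (x,y) ∈ ℝ²: (∂₁₁ũ + ∂₂₂ũ)(x, h(x)y) = ∂ₓₓu(x,y) + h(x)⁻²·∂_{yy}u(x,y) − ((h''(x)h(x) − 2h'(x)²)/h(x)²)·y·∂_y u(x,y) + (h'(x)²/h(x)²)·y²·∂_{yy}u(x,y) − (2h'(x)/h(x))·y·∂ₓ∂_y u(x,y). -/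
open Real

private lemma clm_apply_one {E : Type*} [NormedAddCommGroup E] [NormedSpace ℝ E]
    (L : ℝ × ℝ →L[ℝ] E) (a : ℝ) : L (1, a) = L (1, 0) + a • L (0, 1) := by
  have h : ((1 : ℝ), a) = ((1 : ℝ), (0 : ℝ)) + a • ((0 : ℝ), (1 : ℝ)) := by
    simp [Prod.ext_iff]
  rw [h, map_add, map_smul]

private lemma clm_apply_zero {E : Type*} [NormedAddCommGroup E] [NormedSpace ℝ E]
    (L : ℝ × ℝ →L[ℝ] E) (b : ℝ) : L (0, b) = b • L (0, 1) := by
  have h : ((0 : ℝ), b) = b • ((0 : ℝ), (1 : ℝ)) := by simp [Prod.ext_iff]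
  rw [h, map_smul]

/-- Change of variables `u(x,y) = ũ(x, h(x)y)` mapping the straight strip onto the
varying waveguide: `u` is twice differentiable and the Laplacian of `ũ` at `(x, h(x)y)`
is expressed in terms of the partial derivatives of `u` at `(x,y)`. -/
theorem laplacian_change_of_variables_waveguide
    (h : ℝ → ℝ) (hpos : ∀ x, 0 < h x)
    (hh1 : Differentiable ℝ h) (hh2 : Differentiable ℝ (deriv h))
    (ut : ℝ × ℝ → ℂ) (hut : ContDiff ℝ 2 ut)
    (u : ℝ × ℝ → ℂ) (hu : ∀ x y : ℝ, u (x, y) = ut (x, h x * y)) :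
    Differentiable ℝ u ∧ Differentiable ℝ (fderiv ℝ u) ∧
      ∀ x y : ℝ,
        deriv (fun t => deriv (fun t' => ut (t', h x * y)) t) x
          + deriv (deriv (fun s => ut (x, s))) (h x * y)
        = deriv (fun t => deriv (fun t' => u (t', y)) t) x
          + ((h x : ℂ) ^ 2)⁻¹ * deriv (deriv (fun s => u (x, s))) y
          - (((deriv (deriv h) x * h x - 2 * (deriv h x) ^ 2) / (h x) ^ 2 : ℝ) : ℂ)
              * (y : ℂ) * deriv (fun s => u (x, s)) y
          + (((deriv h x) ^ 2 / (h x) ^ 2 : ℝ) : ℂ) * (y : ℂ) ^ 2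
              * deriv (deriv (fun s => u (x, s))) y
          - ((2 * deriv h x / h x : ℝ) : ℂ) * (y : ℂ)
              * deriv (fun t => deriv (fun s => u (t, s)) y) x := by
  classical
  have hx0 : ∀ x, h x ≠ 0 := fun x => (hpos x).ne'
  have huf : u = fun p : ℝ × ℝ => ut (p.1, h p.1 * p.2) := by
    funext p
    exact hu p.1 p.2
  subst huf
  have hutd : Differentiable ℝ ut := hut.differentiable (by norm_num)
  have hf'd : Differentiable ℝ (fderiv ℝ ut) :=
    (hut.fderiv_right (m := 1) (by norm_num)).differentiable one_ne_zero
  have hψ : Differentiable ℝ (fun p : ℝ × ℝ => (p.1, h p.1 * p.2)) :=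
    differentiable_fst.prodMk ((hh1.comp differentiable_fst).mul differentiable_snd)
  have hudiff : Differentiable ℝ (fun p : ℝ × ℝ => ut (p.1, h p.1 * p.2)) := hutd.comp hψ
  refine ⟨hudiff, ?_, ?_⟩
  · -- differentiability of the derivative
    open ContinuousLinearMap in
    set C₀ : ℝ × ℝ →L[ℝ] ℝ × ℝ := (fst ℝ ℝ ℝ).prod 0 with hC0
    set C₁ : ℝ × ℝ →L[ℝ] ℝ × ℝ := (0 : ℝ × ℝ →L[ℝ] ℝ).prod (fst ℝ ℝ ℝ) with hC1
    set C₂ : ℝ × ℝ →L[ℝ] ℝ × ℝ := (0 : ℝ × ℝ →L[ℝ] ℝ).prod (snd ℝ ℝ ℝ) with hC2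
    set Φ : ℝ × ℝ → (ℝ × ℝ →L[ℝ] ℝ × ℝ) :=
      fun p => C₀ + h p.1 • C₂ + (p.2 * deriv h p.1) • C₁ with hΦdef
    have hψ' : ∀ p : ℝ × ℝ, HasFDerivAt (fun q : ℝ × ℝ => (q.1, h q.1 * q.2)) (Φ p) p := by
      intro p
      have h1 : HasFDerivAt (fun q : ℝ × ℝ => h q.1)
          ((deriv h p.1) • fst ℝ ℝ ℝ) p :=
        (hh1 p.1).hasDerivAt.comp_hasFDerivAt p (hasFDerivAt_fst)
      have h2 : HasFDerivAt (fun q : ℝ × ℝ => h q.1 * q.2)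
          (h p.1 • snd ℝ ℝ ℝ + p.2 • ((deriv h p.1) • fst ℝ ℝ ℝ)) p :=
        h1.mul (hasFDerivAt_snd)
      have h3 := (hasFDerivAt_fst (𝕜 := ℝ) (p := p) (E := ℝ) (F := ℝ)).prodMk h2
      refine h3.congr_fderiv ?_
      ext v <;> simp [hΦdef, hC0, hC1, hC2, smul_smul] <;> ring
    have hfd : fderiv ℝ (fun p : ℝ × ℝ => ut (p.1, h p.1 * p.2))
        = fun p => (fderiv ℝ ut (p.1, h p.1 * p.2)).comp (Φ p) := by
      funext p
      exact (((hutd _).hasFDerivAt).comp p (hψ' p)).fderiv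
    rw [hfd]
    have hΦdiff : Differentiable ℝ Φ :=
      ((differentiable_const C₀).add
        (((hh1.comp differentiable_fst)).smul_const C₂)).add
        ((differentiable_snd.mul (hh2.comp differentiable_fst)).smul_const C₁)
    exact (hf'd.comp hψ).clm_comp hΦdiff
  · intro x y
    set P1 : ℝ × ℝ → ℂ := fun q => fderiv ℝ ut q (1, 0) with hP1def
    set P2 : ℝ × ℝ → ℂ := fun q => fderiv ℝ ut q (0, 1) with hP2def
    have hP1 : Differentiable ℝ P1 := hf'd.clm_apply (differentiable_const _)
    have hP2 : Differentiable ℝ P2 := hf'd.clm_apply (differentiable_const _)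
    have hfP : ∀ (v q w : ℝ × ℝ),
        fderiv ℝ (fun q => fderiv ℝ ut q v) q w = (fderiv ℝ (fderiv ℝ ut) q w) v := by
      intro v q w
      rw [fderiv_clm_apply (hf'd q) (differentiableAt_const v)]
      simp
    -- curve derivative lemmas
    have horiz : ∀ (F : ℝ × ℝ → ℂ), Differentiable ℝ F → ∀ (c t₀ : ℝ),
        HasDerivAt (fun t => F (t, c)) (fderiv ℝ F (t₀, c) (1, 0)) t₀ := fun F hF c t₀ =>
      (hF (t₀, c)).hasFDerivAt.comp_hasDerivAt t₀
        ((hasDerivAt_id t₀).prodMk (hasDerivAt_const t₀ c))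
    have slant : ∀ (F : ℝ × ℝ → ℂ), Differentiable ℝ F → ∀ (t₀ : ℝ),
        HasDerivAt (fun t => F (t, h t * y))
          (fderiv ℝ F (t₀, h t₀ * y) (1, deriv h t₀ * y)) t₀ := fun F hF t₀ =>
      (hF _).hasFDerivAt.comp_hasDerivAt t₀
        ((hasDerivAt_id t₀).prodMk ((hh1 t₀).hasDerivAt.mul_const y))
    have vert : ∀ (F : ℝ × ℝ → ℂ), Differentiable ℝ F → ∀ (x' s₀ : ℝ),
        HasDerivAt (fun s => F (x', h x' * s)) (fderiv ℝ F (x', h x' * s₀) (0, h x')) s₀ := by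
      intro F hF x' s₀
      have := (hF (x', h x' * s₀)).hasFDerivAt.comp_hasDerivAt s₀
        ((hasDerivAt_const s₀ x').prodMk ((hasDerivAt_id s₀).const_mul (h x')))
      simpa [Function.comp_def] using this
    have vert1 : ∀ (F : ℝ × ℝ → ℂ), Differentiable ℝ F → ∀ (x' s₀ : ℝ),
        HasDerivAt (fun s => F (x', s)) (fderiv ℝ F (x', s₀) (0, 1)) s₀ := fun F hF x' s₀ =>
      (hF _).hasFDerivAt.comp_hasDerivAt s₀ ((hasDerivAt_const s₀ x').prodMk (hasDerivAt_id s₀))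
    set p : ℝ × ℝ := (x, h x * y) with hp
    -- symmetry of second derivative
    have hsymm : fderiv ℝ (fderiv ℝ ut) p (1, 0) (0, 1)
        = fderiv ℝ (fderiv ℝ ut) p (0, 1) (1, 0) :=
      second_derivative_symmetric (fun q => (hutd q).hasFDerivAt) (hf'd p).hasFDerivAt _ _
    -- the vertical derivative of u
    have hvu : ∀ (x' s : ℝ),
        deriv (fun s' => (fun q : ℝ × ℝ => ut (q.1, h q.1 * q.2)) (x', s')) s
          = (h x' : ℂ) * P2 (x', h x' * s) := by
      intro x' s
      have := (vert ut hutd x' s).deriv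
      rw [this, clm_apply_zero]
      simp [hP2def, Complex.real_smul]
    -- LHS term 1
    have hL1 : deriv (fun t => deriv (fun t' => ut (t', h x * y)) t) x
        = fderiv ℝ (fderiv ℝ ut) p (1, 0) (1, 0) := by
      have hinner : (fun t => deriv (fun t' => ut (t', h x * y)) t)
          = fun t => P1 (t, h x * y) := by
        funext t
        exact (horiz ut hutd (h x * y) t).deriv
      rw [hinner, (horiz P1 hP1 (h x * y) x).deriv, hfP]
    -- LHS term 2
    have hL2 : deriv (deriv (fun s => ut (x, s))) (h x * y)
        = fderiv ℝ (fderiv ℝ ut) p (0, 1) (0, 1) := by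
      have hinner : deriv (fun s => ut (x, s)) = fun s => P2 (x, s) := by
        funext s
        exact (vert1 ut hutd x s).deriv
      rw [hinner, (vert1 P2 hP2 x (h x * y)).deriv, hfP]
    -- ∂xx u
    have hE1 : deriv (fun t => deriv (fun t' => (fun q : ℝ × ℝ => ut (q.1, h q.1 * q.2)) (t', y)) t) x
        = (fderiv ℝ P1 p (1, deriv h x * y))
          + (((deriv (deriv h) x * y : ℝ) : ℂ) * P2 p
            + ((deriv h x * y : ℝ) : ℂ) * fderiv ℝ P2 p (1, deriv h x * y)) := by
      have hinner : (fun t => deriv (fun t' => (fun q : ℝ × ℝ => ut (q.1, h q.1 * q.2)) (t', y)) t)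
          = fun t => P1 (t, h t * y) + ((deriv h t * y : ℝ) : ℂ) * P2 (t, h t * y) := by
        funext t
        have := (slant ut hutd t).deriv
        rw [this, clm_apply_one]
        simp [hP1def, hP2def, Complex.real_smul]
      rw [hinner]
      have d1 := slant P1 hP1 x
      have d2 : HasDerivAt (fun t => ((deriv h t * y : ℝ) : ℂ))
          ((deriv (deriv h) x * y : ℝ) : ℂ) x :=
        ((hh2 x).hasDerivAt.mul_const y).ofReal_comp
      have d3 := slant P2 hP2 x
      exact (d1.add (d2.mul d3)).deriv
    -- ∂yy u
    have hE2 : deriv (deriv (fun s => (fun q : ℝ × ℝ => ut (q.1, h q.1 * q.2)) (x, s))) y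
        = (h x : ℂ) * ((h x : ℂ) * fderiv ℝ P2 p (0, 1)) := by
      have hinner : deriv (fun s => (fun q : ℝ × ℝ => ut (q.1, h q.1 * q.2)) (x, s))
          = fun s => (h x : ℂ) * P2 (x, h x * s) := by
        funext s
        exact hvu x s
      rw [hinner]
      have d := ((vert P2 hP2 x y).const_mul ((h x : ℂ))).deriv
      rw [d, clm_apply_zero, Complex.real_smul, ← hp]
    -- ∂y u
    have hE3 : deriv (fun s => (fun q : ℝ × ℝ => ut (q.1, h q.1 * q.2)) (x, s)) y
        = (h x : ℂ) * P2 p := hvu x y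
    -- mixed ∂x ∂y u
    have hE4 : deriv (fun t => deriv (fun s => (fun q : ℝ × ℝ => ut (q.1, h q.1 * q.2)) (t, s)) y) x
        = ((deriv h x : ℝ) : ℂ) * P2 p + (h x : ℂ) * fderiv ℝ P2 p (1, deriv h x * y) := by
      have hinner : (fun t => deriv (fun s => (fun q : ℝ × ℝ => ut (q.1, h q.1 * q.2)) (t, s)) y)
          = fun t => ((h t : ℝ) : ℂ) * P2 (t, h t * y) := by
        funext t
        exact hvu t y
      rw [hinner]
      have dh : HasDerivAt (fun t => ((h t : ℝ) : ℂ)) ((deriv h x : ℝ) : ℂ) x :=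
        (hh1 x).hasDerivAt.ofReal_comp
      exact (dh.mul (slant P2 hP2 x)).deriv
    simp only at hE1 hE2 hE3 hE4 ⊢
    rw [hL1, hL2, hE1, hE2, hE3, hE4]
    rw [hfP, hfP, hfP]
    rw [clm_apply_one (fderiv ℝ (fderiv ℝ ut) p) (deriv h x * y)]
    simp only [ContinuousLinearMap.add_apply, ContinuousLinearMap.smul_apply,
      Complex.real_smul]
    rw [hsymm]
    set A := fderiv ℝ (fderiv ℝ ut) p (1, 0) (1, 0)
    set B := fderiv ℝ (fderiv ℝ ut) p (0, 1) (1, 0)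
    set B' := fderiv ℝ (fderiv ℝ ut) p (0, 1) (0, 1)
    set T := P2 p
    have hxC : (h x : ℂ) ≠ 0 := by exact_mod_cast hx0 x
    push_cast
    field_simp
    ring
end

section
/- Let U ⊆ ℝ be open, h : U → (0,∞) twice continuously differentiable, k > 0 and n ∈ ℕ, and suppose k² − n²π²/h(x)² > 0 for all x ∈ U. Define κ(x) = √(k² − n²π²/h(x)²). Then κ is twice continuously differentiable on U, κ'(x) = n²π²·h'(x)/(h(x)³·κ(x)), and for all x ∈ U: κ(x)^{−1/2}·(κ^{−1/2})''(x) = 5·n⁴π⁴·h'(x)²/(4·h(x)⁶·κ(x)⁵) − n²π²·(h''(x)·h(x) − 3·h'(x)²)/(2·h(x)⁴·κ(x)³). -/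
open Real

/-- For a propagative mode, the local wavenumber `κ(x) = √(k² − n²π²/h(x)²)` is C² on `U`,
its derivative is `κ' = n²π² h'/(h³κ)`, and the Liouville–Green error-control integrand
satisfies `κ^{-1/2}·(κ^{-1/2})'' = 5n⁴π⁴h'²/(4h⁶κ⁵) − n²π²(h''h − 3h'²)/(2h⁴κ³)`. -/
theorem wavenumber_liouville_green_integrand
    (U : Set ℝ) (hU : IsOpen U)
    (h : ℝ → ℝ) (hh : ContDiffOn ℝ 2 h U) (hpos : ∀ x ∈ U, 0 < h x)
    (k : ℝ) (hk : 0 < k) (n : ℕ)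
    (hprop : ∀ x ∈ U, 0 < k ^ 2 - (n : ℝ) ^ 2 * Real.pi ^ 2 / (h x) ^ 2)
    (κ : ℝ → ℝ)
    (hκ : ∀ x, κ x = Real.sqrt (k ^ 2 - (n : ℝ) ^ 2 * Real.pi ^ 2 / (h x) ^ 2)) :
    ContDiffOn ℝ 2 κ U ∧
    (∀ x ∈ U, deriv κ x
      = (n : ℝ) ^ 2 * Real.pi ^ 2 * deriv h x / ((h x) ^ 3 * κ x)) ∧
    (∀ x ∈ U,
      (Real.sqrt (κ x))⁻¹ * deriv (deriv (fun t => (Real.sqrt (κ t))⁻¹)) x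
        = 5 * (n : ℝ) ^ 4 * Real.pi ^ 4 * (deriv h x) ^ 2 / (4 * (h x) ^ 6 * (κ x) ^ 5)
          - (n : ℝ) ^ 2 * Real.pi ^ 2 * (deriv (deriv h) x * h x - 3 * (deriv h x) ^ 2)
              / (2 * (h x) ^ 4 * (κ x) ^ 3)) := by
  set c : ℝ := (n : ℝ) ^ 2 * Real.pi ^ 2 with hc
  have hcnn : 0 ≤ c := by positivity
  have hκfun : κ = fun t => Real.sqrt (k ^ 2 - c * ((h t) ^ 2)⁻¹) := by
    funext t; rw [hκ t, div_eq_mul_inv]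
  have hgpos : ∀ x ∈ U, 0 < k ^ 2 - c * ((h x) ^ 2)⁻¹ := by
    intro x hx; have := hprop x hx; rwa [div_eq_mul_inv] at this
  have hκpos : ∀ x ∈ U, 0 < κ x := by
    intro x hx
    rw [hκfun]; exact Real.sqrt_pos.mpr (hgpos x hx)
  have hh1 : DifferentiableOn ℝ h U := hh.differentiableOn two_ne_zero
  have hhd : ContDiffOn ℝ 1 (deriv h) U := by
    have h2 : ContDiffOn ℝ ((1 : ℕ) + 1) h U := by exact_mod_cast hh
    exact ((contDiffOn_succ_iff_deriv_of_isOpen hU).mp h2).2.2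
  have hhd1 : DifferentiableOn ℝ (deriv h) U := hhd.differentiableOn one_ne_zero
  -- derivative of κ on U
  have dκ : ∀ x ∈ U, HasDerivAt κ (c * deriv h x / ((h x) ^ 3 * κ x)) x := by
    intro x hx
    have hhx : 0 < h x := hpos x hx
    have dh : HasDerivAt h (deriv h x) x :=
      (hh1.differentiableAt (hU.mem_nhds hx)).hasDerivAt
    have dg : HasDerivAt (fun t => k ^ 2 - c * ((h t) ^ 2)⁻¹)
        (2 * c * deriv h x / (h x) ^ 3) x := by
      have := (((dh.pow 2).inv (pow_ne_zero 2 hhx.ne')).const_mul c).const_sub (k ^ 2)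
      simp only [Pi.inv_apply, Pi.pow_apply] at this
      refine this.congr_deriv ?_
      have hhne : h x ≠ 0 := hhx.ne'
      field_simp
      ring
    have hsg : Real.sqrt (k ^ 2 - c * ((h x) ^ 2)⁻¹) = κ x := by rw [hκfun]
    have this1 := dg.sqrt (hgpos x hx).ne'
    rw [hsg, ← hκfun] at this1
    convert this1 using 1
    have hKne : κ x ≠ 0 := (hκpos x hx).ne'
    field_simp
  refine ⟨?_, ?_, ?_⟩
  · -- C² regularity
    rw [hκfun]
    refine ContDiffOn.sqrt ?_ (fun x hx => (hgpos x hx).ne')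
    exact contDiffOn_const.sub (contDiffOn_const.mul
      ((hh.pow 2).inv (fun x hx => pow_ne_zero 2 (hpos x hx).ne')))
  · intro x hx
    exact (dκ x hx).deriv
  · intro x hx
    have hhx : 0 < h x := hpos x hx
    have hKx : 0 < κ x := hκpos x hx
    have hsx : 0 < Real.sqrt (κ x) := Real.sqrt_pos.mpr hKx
    have hs2 : Real.sqrt (κ x) ^ 2 = κ x := Real.sq_sqrt hKx.le
    -- derivative of f = (√κ)⁻¹ on U
    have hder : ∀ t ∈ U, deriv (fun u => (Real.sqrt (κ u))⁻¹) t
        = -(c * deriv h t / ((h t) ^ 3 * κ t) / (2 * Real.sqrt (κ t)))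
            / Real.sqrt (κ t) ^ 2 := by
      intro t ht
      exact (((dκ t ht).sqrt (hκpos t ht).ne').inv
        (Real.sqrt_pos.mpr (hκpos t ht)).ne').deriv
    have hev : (deriv fun t => (Real.sqrt (κ t))⁻¹) =ᶠ[nhds x]
        (fun t => -(c * deriv h t / ((h t) ^ 3 * κ t) / (2 * Real.sqrt (κ t)))
            / Real.sqrt (κ t) ^ 2) :=
      Filter.eventuallyEq_of_mem (hU.mem_nhds hx) (fun t ht => hder t ht)
    -- derivative of the explicit formula at x
    have dh : HasDerivAt h (deriv h x) x :=
      (hh1.differentiableAt (hU.mem_nhds hx)).hasDerivAt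
    have dh2 : HasDerivAt (deriv h) (deriv (deriv h) x) x :=
      (hhd1.differentiableAt (hU.mem_nhds hx)).hasDerivAt
    have dK := dκ x hx
    have hB0 : (h x) ^ 3 * κ x ≠ 0 := by positivity
    have hW0 : 2 * Real.sqrt (κ x) ≠ 0 := by positivity
    have hS20 : Real.sqrt (κ x) ^ 2 ≠ 0 := by positivity
    have dF := (((dh2.const_mul c).div ((dh.pow 3).mul dK) hB0).div
      ((dK.sqrt hKx.ne').const_mul 2) hW0).neg.div ((dK.sqrt hKx.ne').pow 2) hS20
    have key := hev.deriv_eq.trans dF.deriv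
    rw [key]
    simp only [Pi.neg_apply, Pi.div_apply, Pi.mul_apply, Pi.pow_apply]
    have hsne : Real.sqrt (κ x) ≠ 0 := hsx.ne'
    have hhne : h x ≠ 0 := hhx.ne'
    set K := κ x with hK
    set s := Real.sqrt K with hsdef
    rw [← hs2]
    rw [hc]
    field_simp
    ring
end

section
/- Let η, R, δ, h_min, h_max > 0, k > 0, n ∈ ℕ, and let h : ℝ → ℝ be twice continuously differentiable with h_min ≤ h(x) ≤ h_max, |h'(x)| ≤ η and |h''(x)| ≤ η² for all x, and h'(x) = 0 whenever |x| ≥ R/η. Suppose κ(x) := √(k² − n²π²/h(x)²) is well defined with κ(x) ≥ δ for all x ∈ ℝ. Then ∫_ℝ |κ(x)^{−1/2}·(κ^{−1/2})''(x)| dx ≤ 2Rη·( n²π²·(h_max + 3)/(2·h_min⁴·δ³) + 5·n⁴π⁴/(4·h_min⁶·δ⁵) ). -/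
open Real MeasureTheory

set_option maxHeartbeats 1000000 in
/-- Bound on the Liouville–Green error-control integral for a propagative mode in a
slowly varying waveguide: under Assumption 1 (`|h'| ≤ η`, `|h''| ≤ η²`, `h'` supported
in `[−R/η, R/η]`) and the lower bound `κ ≥ δ` on the local wavenumber,
`∫_ℝ |κ^{-1/2}(κ^{-1/2})''| ≤ 2Rη (n²π²(h_max+3)/(2h_min⁴δ³) + 5n⁴π⁴/(4h_min⁶δ⁵))`. -/
theorem liouville_green_error_integral_bound
    (η R δ hmin hmax k : ℝ) (n : ℕ)
    (hη : 0 < η) (hR : 0 < R) (hδ : 0 < δ) (hmin_pos : 0 < hmin)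
    (hmax_pos : 0 < hmax) (hk : 0 < k)
    (h : ℝ → ℝ) (hh : ContDiff ℝ 2 h)
    (hbound : ∀ x, hmin ≤ h x ∧ h x ≤ hmax)
    (hd1 : ∀ x, |deriv h x| ≤ η)
    (hd2 : ∀ x, |deriv (deriv h) x| ≤ η ^ 2)
    (hsupp : ∀ x : ℝ, R / η ≤ |x| → deriv h x = 0)
    (κ : ℝ → ℝ)
    (hκ : ∀ x, κ x = Real.sqrt (k ^ 2 - (n : ℝ) ^ 2 * Real.pi ^ 2 / (h x) ^ 2))
    (hδκ : ∀ x, δ ≤ κ x) :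
    (∫ x : ℝ, |(Real.sqrt (κ x))⁻¹ * deriv (deriv (fun t => (Real.sqrt (κ t))⁻¹)) x|)
      ≤ 2 * R * η *
        ((n : ℝ) ^ 2 * Real.pi ^ 2 * (hmax + 3) / (2 * hmin ^ 4 * δ ^ 3)
          + 5 * (n : ℝ) ^ 4 * Real.pi ^ 4 / (4 * hmin ^ 6 * δ ^ 5)) := by
  set a : ℝ := (n : ℝ) ^ 2 * Real.pi ^ 2 with ha_def
  have ha : 0 ≤ a := by positivity
  set G : ℝ → ℝ := fun x => k ^ 2 - a / (h x) ^ 2 with hG_def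
  have hκG : ∀ x, κ x = Real.sqrt (G x) := fun x => hκ x
  have hhpos : ∀ x, 0 < h x := fun x => lt_of_lt_of_le hmin_pos (hbound x).1
  have hκpos : ∀ x, 0 < κ x := fun x => lt_of_lt_of_le hδ (hδκ x)
  have hGpos : ∀ x, 0 < G x := fun x => Real.sqrt_pos.mp (by rw [← hκG x]; exact hκpos x)
  have hspos : ∀ x, 0 < Real.sqrt (κ x) := fun x => Real.sqrt_pos.mpr (hκpos x)
  have h1 : Differentiable ℝ h := hh.differentiable (by norm_num)
  have hcd1 : ContDiff ℝ 1 (deriv h) := (contDiff_succ_iff_deriv.mp hh).2.2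
  have h2 : Differentiable ℝ (deriv h) := hcd1.differentiable (by norm_num)
  -- derivative of G
  have hGd : ∀ x, HasDerivAt G (2 * a * deriv h x / (h x) ^ 3) x := by
    intro x
    have hpx := hhpos x
    have hdx : HasDerivAt h (deriv h x) x := (h1 x).hasDerivAt
    have hinv : HasDerivAt (fun y => ((h y) ^ 2)⁻¹)
        (-((2 : ℕ) * h x ^ 1 * deriv h x) / ((h x) ^ 2) ^ 2) x :=
      (hdx.pow 2).inv (pow_ne_zero 2 hpx.ne')
    have key := (hinv.const_mul a).const_sub (k ^ 2)
    have hGe : (fun y => k ^ 2 - a * ((h y) ^ 2)⁻¹) = G := by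
      funext y; simp [hG_def, div_eq_mul_inv]
    rw [hGe] at key
    refine key.congr_deriv ?_
    have := hpx.ne'
    field_simp
    ring
  -- derivative of κ
  have hκd : ∀ x, HasDerivAt κ (a * deriv h x / ((h x) ^ 3 * κ x)) x := by
    intro x
    have hpx := hhpos x
    have key := (hGd x).sqrt (hGpos x).ne'
    have hκe : (fun y => Real.sqrt (G y)) = κ := funext fun y => (hκG y).symm
    rw [hκe] at key
    convert key using 1
    rw [hκG x]
    have h3 : Real.sqrt (G x) ≠ 0 := (Real.sqrt_pos.mpr (hGpos x)).ne'
    have := hpx.ne'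
    field_simp
  -- derivative of √κ
  have hsd : ∀ x, HasDerivAt (fun y => Real.sqrt (κ y))
      (a * deriv h x / ((h x) ^ 3 * κ x) / (2 * Real.sqrt (κ x))) x :=
    fun x => (hκd x).sqrt (hκpos x).ne'
  -- first derivative of f
  have hfd : ∀ x, HasDerivAt (fun t => (Real.sqrt (κ t))⁻¹)
      (-(a * deriv h x) / (2 * (h x) ^ 3 * κ x * Real.sqrt (κ x) ^ 3)) x := by
    intro x
    have key : HasDerivAt (fun t => (Real.sqrt (κ t))⁻¹) _ x := (hsd x).inv (hspos x).ne'
    convert key using 1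
    have e1 := (hhpos x).ne'
    have e2 := (hκpos x).ne'
    have e3 := (hspos x).ne'
    rw [div_eq_div_iff (by positivity) (by positivity)]
    field_simp
  have hderiv1 : deriv (fun t => (Real.sqrt (κ t))⁻¹)
      = fun y => -(a * deriv h y) / (2 * (h y) ^ 3 * κ y * Real.sqrt (κ y) ^ 3) :=
    funext fun x => (hfd x).deriv
  -- the key pointwise identity
  have hE : ∀ x, (Real.sqrt (κ x))⁻¹ * deriv (deriv (fun t => (Real.sqrt (κ t))⁻¹)) x
      = -(a * deriv (deriv h) x) / (2 * (h x) ^ 3 * (κ x) ^ 3)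
        + 3 * a / 2 * (deriv h x) ^ 2 / ((h x) ^ 4 * (κ x) ^ 3)
        + 5 / 4 * a ^ 2 * (deriv h x) ^ 2 / ((h x) ^ 6 * (κ x) ^ 5) := by
    intro x
    have hpx := hhpos x
    have hκx := hκpos x
    have hsx := hspos x
    have hdx : HasDerivAt h (deriv h x) x := (h1 x).hasDerivAt
    have hnum : HasDerivAt (fun y => -(a * deriv h y)) (-(a * deriv (deriv h) x)) x :=
      (((h2 x).hasDerivAt).const_mul a).neg
    have hden := (((hdx.pow 3).const_mul 2).mul (hκd x)).mul ((hsd x).pow 3)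
    have hdenne : 2 * (h x) ^ 3 * κ x * Real.sqrt (κ x) ^ 3 ≠ 0 := by positivity
    have hdd : HasDerivAt (fun y => -(a * deriv h y) / (2 * (h y) ^ 3 * κ y * Real.sqrt (κ y) ^ 3)) _ x :=
      hnum.div hden hdenne
    rw [hderiv1, hdd.deriv]
    simp only [Pi.pow_apply, Pi.mul_apply]
    set sx := Real.sqrt (κ x) with hsx_def
    have hs2 : sx ^ 2 = κ x := Real.sq_sqrt hκx.le
    rw [← hs2]
    have e1 := hpx.ne'
    have e2 := hsx.ne'
    field_simp
    ring
  -- the integrand vanishes outside [-R/η, R/η]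
  have hzero : ∀ x : ℝ, R / η < |x| →
      -(a * deriv (deriv h) x) / (2 * (h x) ^ 3 * (κ x) ^ 3)
        + 3 * a / 2 * (deriv h x) ^ 2 / ((h x) ^ 4 * (κ x) ^ 3)
        + 5 / 4 * a ^ 2 * (deriv h x) ^ 2 / ((h x) ^ 6 * (κ x) ^ 5) = 0 := by
    intro x hx
    have hopen : IsOpen {y : ℝ | R / η < |y|} := isOpen_lt continuous_const continuous_abs
    have hev : deriv h =ᶠ[nhds x] (fun _ => (0 : ℝ)) :=
      Filter.eventually_of_mem (hopen.mem_nhds hx) fun y hy => hsupp y (le_of_lt hy)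
    have hdd2 : deriv (deriv h) x = 0 := by
      rw [hev.deriv_eq]; simp
    rw [hdd2, hsupp x hx.le]
    simp
  -- pointwise bound
  have hEbound : ∀ x : ℝ,
      |-(a * deriv (deriv h) x) / (2 * (h x) ^ 3 * (κ x) ^ 3)
        + 3 * a / 2 * (deriv h x) ^ 2 / ((h x) ^ 4 * (κ x) ^ 3)
        + 5 / 4 * a ^ 2 * (deriv h x) ^ 2 / ((h x) ^ 6 * (κ x) ^ 5)|
      ≤ η ^ 2 * (a * (hmax + 3) / (2 * hmin ^ 4 * δ ^ 3)
          + 5 * a ^ 2 / (4 * hmin ^ 6 * δ ^ 5)) := by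
    intro x
    have hpx := hhpos x
    have hκx := hκpos x
    have hx1 := (hbound x).1
    have hx2 := (hbound x).2
    have hdh2 : (deriv h x) ^ 2 ≤ η ^ 2 := by
      rw [← sq_abs]; exact pow_le_pow_left₀ (abs_nonneg _) (hd1 x) 2
    have hb1 : |-(a * deriv (deriv h) x) / (2 * (h x) ^ 3 * (κ x) ^ 3)|
        ≤ a * η ^ 2 * hmax / (2 * hmin ^ 4 * δ ^ 3) := by
      rw [abs_div, abs_neg, abs_mul, abs_of_nonneg ha,
        abs_of_pos (show (0:ℝ) < 2 * (h x) ^ 3 * (κ x) ^ 3 by positivity)]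
      calc a * |deriv (deriv h) x| / (2 * (h x) ^ 3 * (κ x) ^ 3)
          = a * |deriv (deriv h) x| * h x / (2 * (h x) ^ 4 * (κ x) ^ 3) := by
            field_simp
        _ ≤ a * η ^ 2 * hmax / (2 * hmin ^ 4 * δ ^ 3) := by
            gcongr
            all_goals first | exact hd2 x | exact hx2 | exact hδκ x | exact hx1
    have hb2 : |3 * a / 2 * (deriv h x) ^ 2 / ((h x) ^ 4 * (κ x) ^ 3)|
        ≤ 3 * a / 2 * η ^ 2 / (hmin ^ 4 * δ ^ 3) := by
      rw [abs_of_nonneg (by positivity)]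
      gcongr
      all_goals first | exact hdh2 | exact hδκ x | exact hx1
    have hb3 : |5 / 4 * a ^ 2 * (deriv h x) ^ 2 / ((h x) ^ 6 * (κ x) ^ 5)|
        ≤ 5 / 4 * a ^ 2 * η ^ 2 / (hmin ^ 6 * δ ^ 5) := by
      rw [abs_of_nonneg (by positivity)]
      gcongr
      all_goals first | exact hdh2 | exact hδκ x | exact hx1
    have htri := abs_add_le
      (-(a * deriv (deriv h) x) / (2 * (h x) ^ 3 * (κ x) ^ 3)
        + 3 * a / 2 * (deriv h x) ^ 2 / ((h x) ^ 4 * (κ x) ^ 3))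
      (5 / 4 * a ^ 2 * (deriv h x) ^ 2 / ((h x) ^ 6 * (κ x) ^ 5))
    have htri2 := abs_add_le
      (-(a * deriv (deriv h) x) / (2 * (h x) ^ 3 * (κ x) ^ 3))
      (3 * a / 2 * (deriv h x) ^ 2 / ((h x) ^ 4 * (κ x) ^ 3))
    have hEq : η ^ 2 * (a * (hmax + 3) / (2 * hmin ^ 4 * δ ^ 3)
          + 5 * a ^ 2 / (4 * hmin ^ 6 * δ ^ 5))
        = a * η ^ 2 * hmax / (2 * hmin ^ 4 * δ ^ 3)
          + 3 * a / 2 * η ^ 2 / (hmin ^ 4 * δ ^ 3)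
          + 5 / 4 * a ^ 2 * η ^ 2 / (hmin ^ 6 * δ ^ 5) := by
      field_simp
    rw [hEq]
    linarith
  -- rewrite the integrand
  have hfun : (fun x : ℝ => |(Real.sqrt (κ x))⁻¹ * deriv (deriv (fun t => (Real.sqrt (κ t))⁻¹)) x|)
      = fun x => |-(a * deriv (deriv h) x) / (2 * (h x) ^ 3 * (κ x) ^ 3)
        + 3 * a / 2 * (deriv h x) ^ 2 / ((h x) ^ 4 * (κ x) ^ 3)
        + 5 / 4 * a ^ 2 * (deriv h x) ^ 2 / ((h x) ^ 6 * (κ x) ^ 5)| :=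
    funext fun x => by rw [hE x]
  rw [hfun]
  set E : ℝ → ℝ := fun x => -(a * deriv (deriv h) x) / (2 * (h x) ^ 3 * (κ x) ^ 3)
        + 3 * a / 2 * (deriv h x) ^ 2 / ((h x) ^ 4 * (κ x) ^ 3)
        + 5 / 4 * a ^ 2 * (deriv h x) ^ 2 / ((h x) ^ 6 * (κ x) ^ 5) with hE_def
  have hc : 0 < R / η := div_pos hR hη
  have hind : (fun x : ℝ => |E x|)
      = (Set.Icc (-(R / η)) (R / η)).indicator (fun x => |E x|) := by
    funext x
    by_cases hx : x ∈ Set.Icc (-(R / η)) (R / η)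
    · rw [Set.indicator_of_mem hx]
    · rw [Set.indicator_of_notMem hx]
      have hlt : R / η < |x| := by
        simp only [Set.mem_Icc, not_and_or, not_le] at hx
        rcases hx with hx | hx
        · exact lt_abs.mpr (Or.inr (by linarith))
        · exact lt_abs.mpr (Or.inl hx)
      rw [show E x = 0 from hzero x hlt, abs_zero]
  rw [hind, MeasureTheory.integral_indicator measurableSet_Icc]
  set C : ℝ := η ^ 2 * (a * (hmax + 3) / (2 * hmin ^ 4 * δ ^ 3)
      + 5 * a ^ 2 / (4 * hmin ^ 6 * δ ^ 5)) with hC_def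
  have hsfin : volume (Set.Icc (-(R / η)) (R / η)) < ⊤ := measure_Icc_lt_top
  have hnorm : ‖∫ x in Set.Icc (-(R / η)) (R / η), |E x|‖
      ≤ C * (volume (Set.Icc (-(R / η)) (R / η))).toReal :=
    MeasureTheory.norm_setIntegral_le_of_norm_le_const_ae' hsfin
      (Filter.Eventually.of_forall fun x _ => by
        rw [Real.norm_eq_abs, abs_abs]; exact hEbound x)
  have hle : (∫ x in Set.Icc (-(R / η)) (R / η), |E x|)
      ≤ C * (volume (Set.Icc (-(R / η)) (R / η))).toReal := by
    refine le_trans ?_ hnorm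
    rw [Real.norm_eq_abs]
    exact le_abs_self _
  refine hle.trans ?_
  rw [Real.volume_Icc, ENNReal.toReal_ofReal (by linarith : (0:ℝ) ≤ R / η - -(R / η))]
  apply le_of_eq
  rw [hC_def, ha_def]
  field_simp
  ring
end

section
/- Let 0 < h_min < h_max, a > 0, and let h : ℝ → ℝ be continuous and nondecreasing with h(x) = h_min for x ≤ −a and h(x) = h_max for x ≥ a. Let k > 0 and N ∈ ℕ with h_min < Nπ/k < h_max, let x* ∈ ℝ be a point with h(x*) = Nπ/k, and assume h(x) ≠ Nπ/k for every x ≠ x*. Define ξ : ℝ → ℝ by ξ(x) = ( (3/2)·∫ₓ^{x*} √(N²π²/h(t)² − k²) dt )^{2/3} for x ≤ x*, and ξ(x) = −( (3/2)·∫_{x*}^{x} √(k² − N²π²/h(t)²) dt )^{2/3} for x > x*. Then ξ is a continuous, strictly decreasing bijection from ℝ onto ℝ, with ξ(x*) = 0, ξ > 0 on (−∞,x*) and ξ < 0 on (x*,∞). -/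
open Real intervalIntegral

noncomputable def langerS (y : ℝ) : ℝ :=
  if 0 ≤ y then ((3 / 2) * y) ^ ((2 : ℝ) / 3) else -(((3 / 2) * (-y)) ^ ((2 : ℝ) / 3))

lemma langerS_zero : langerS 0 = 0 := by
  simp [langerS, Real.zero_rpow (by norm_num : (2:ℝ)/3 ≠ 0)]

lemma langerS_strictMono : StrictMono langerS := by
  intro y z hyz
  unfold langerS
  rcases le_or_gt 0 y with hy | hy
  · rw [if_pos hy, if_pos (hy.trans hyz.le)]
    exact Real.rpow_lt_rpow (by linarith) (by linarith) (by norm_num)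
  · rw [if_neg (not_le.2 hy)]
    rcases le_or_gt 0 z with hz | hz
    · rw [if_pos hz]
      have h1 : 0 < ((3/2) * (-y)) ^ ((2:ℝ)/3) :=
        Real.rpow_pos_of_pos (by linarith) _
      have h2 : (0:ℝ) ≤ ((3/2) * z) ^ ((2:ℝ)/3) :=
        Real.rpow_nonneg (by linarith) _
      linarith
    · rw [if_neg (not_le.2 hz)]
      have : ((3/2) * (-z)) ^ ((2:ℝ)/3) < ((3/2) * (-y)) ^ ((2:ℝ)/3) :=
        Real.rpow_lt_rpow (by linarith) (by linarith) (by norm_num)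
      linarith

lemma langerS_surjective : Function.Surjective langerS := by
  intro z
  rcases le_or_gt 0 z with hz | hz
  · refine ⟨(2/3) * z ^ ((3:ℝ)/2), ?_⟩
    have hy : 0 ≤ (2/3) * z ^ ((3:ℝ)/2) := by positivity
    rw [langerS, if_pos hy]
    have : (3/2 : ℝ) * ((2/3) * z ^ ((3:ℝ)/2)) = z ^ ((3:ℝ)/2) := by ring
    rw [this, ← Real.rpow_mul hz]
    norm_num
  · refine ⟨-((2/3) * (-z) ^ ((3:ℝ)/2)), ?_⟩
    have hzpos : 0 < -z := by linarith
    have hy : ¬ (0 ≤ -((2/3) * (-z) ^ ((3:ℝ)/2))) := by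
      have : 0 < (2/3) * (-z) ^ ((3:ℝ)/2) := by positivity
      linarith
    rw [langerS, if_neg hy, neg_neg]
    have : (3/2 : ℝ) * ((2/3) * (-z) ^ ((3:ℝ)/2)) = (-z) ^ ((3:ℝ)/2) := by ring
    rw [this, ← Real.rpow_mul hzpos.le]
    norm_num

lemma langerS_continuous : Continuous langerS := by
  have : langerS = fun y => if (fun _ : ℝ => (0:ℝ)) y ≤ id y then
      ((3 / 2) * y) ^ ((2 : ℝ) / 3) else -(((3 / 2) * (-y)) ^ ((2 : ℝ) / 3)) := rfl
  rw [this]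
  apply Continuous.if_le
  · exact (continuous_const.mul continuous_id).rpow_const fun _ => Or.inr (by norm_num)
  · exact ((continuous_const.mul continuous_id.neg).rpow_const
      fun _ => Or.inr (by norm_num)).neg
  · exact continuous_const
  · exact continuous_id
  · intro y hy
    simp only [id] at hy
    subst hy
    simp [Real.zero_rpow (by norm_num : (2:ℝ)/3 ≠ 0)]

/-- The Langer variable `ξ` of the locally resonant mode `N` is a continuous, strictly
decreasing bijection of `ℝ` onto `ℝ`, vanishing exactly at the resonant point `x*`,
positive before it and negative after it. -/
theorem langer_variable_bijection
    (hmin hmax a k : ℝ) (N : ℕ) (h : ℝ → ℝ) (xs : ℝ)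
    (hmin_pos : 0 < hmin) (hminmax : hmin < hmax) (ha : 0 < a) (hk : 0 < k)
    (hcont : Continuous h) (hmono : Monotone h)
    (hleft : ∀ x ≤ -a, h x = hmin) (hright : ∀ x, a ≤ x → h x = hmax)
    (hres1 : hmin < N * Real.pi / k) (hres2 : N * Real.pi / k < hmax)
    (hxs : h xs = N * Real.pi / k)
    (huniq : ∀ x, x ≠ xs → h x ≠ N * Real.pi / k)
    (ξ : ℝ → ℝ)
    (hξ : ∀ x, ξ x =
      if x ≤ xs then
        ((3 / 2) * ∫ t in x..xs,
            Real.sqrt ((N : ℝ) ^ 2 * Real.pi ^ 2 / (h t) ^ 2 - k ^ 2)) ^ ((2 : ℝ) / 3)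
      else
        -(((3 / 2) * ∫ t in xs..x,
            Real.sqrt (k ^ 2 - (N : ℝ) ^ 2 * Real.pi ^ 2 / (h t) ^ 2)) ^ ((2 : ℝ) / 3))) :
    Continuous ξ ∧ StrictAnti ξ ∧ Function.Bijective ξ ∧ ξ xs = 0 ∧
      (∀ x < xs, 0 < ξ x) ∧ (∀ x, xs < x → ξ x < 0) := by
  -- basic positivity facts
  set r : ℝ := N * Real.pi / k with hr
  have hr_pos : 0 < r := hmin_pos.trans hres1
  have hhmin : ∀ x, hmin ≤ h x := by
    intro x
    have h1 : h (min x (-a)) = hmin := hleft _ (min_le_right x (-a))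
    calc hmin = h (min x (-a)) := h1.symm
      _ ≤ h x := hmono (min_le_left x (-a))
  have hpos : ∀ x, 0 < h x := fun x => hmin_pos.trans_le (hhmin x)
  -- the quantity q
  set q : ℝ → ℝ := fun t => (N : ℝ) ^ 2 * Real.pi ^ 2 / (h t) ^ 2 - k ^ 2 with hqdef
  have hNpi : (N : ℝ) ^ 2 * Real.pi ^ 2 = r ^ 2 * k ^ 2 := by
    have hrk : r * k = N * Real.pi := div_mul_cancel₀ _ hk.ne'
    calc (N : ℝ) ^ 2 * Real.pi ^ 2 = ((N : ℝ) * Real.pi) ^ 2 := by ring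
      _ = (r * k) ^ 2 := by rw [hrk]
      _ = r ^ 2 * k ^ 2 := by ring
  have hq_xs : q xs = 0 := by
    simp only [hqdef, hxs, hNpi]
    field_simp
    ring
  -- sign of q
  have hq_of_lt : ∀ t, h t < r → 0 < q t := by
    intro t ht
    have hsq : (h t) ^ 2 < r ^ 2 := by nlinarith [hpos t]
    have h2 : k ^ 2 * (h t) ^ 2 < r ^ 2 * k ^ 2 := by nlinarith [mul_lt_mul_of_pos_left hsq (pow_pos hk 2)]
    have : k ^ 2 < r ^ 2 * k ^ 2 / (h t) ^ 2 := by
      rw [lt_div_iff₀ (pow_pos (hpos t) 2)]; linarith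
    simp only [hqdef, hNpi]; linarith
  have hq_of_gt : ∀ t, r < h t → q t < 0 := by
    intro t ht
    have hsq : r ^ 2 < (h t) ^ 2 := by nlinarith [hpos t, hr_pos]
    have h2 : r ^ 2 * k ^ 2 < k ^ 2 * (h t) ^ 2 := by nlinarith [mul_lt_mul_of_pos_left hsq (pow_pos hk 2)]
    have : r ^ 2 * k ^ 2 / (h t) ^ 2 < k ^ 2 := by
      rw [div_lt_iff₀ (pow_pos (hpos t) 2)]; linarith
    simp only [hqdef, hNpi]; linarith
  have hq_pos : ∀ t, t < xs → 0 < q t := by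
    intro t ht
    have h1 : h t ≤ r := hxs ▸ hmono ht.le
    exact hq_of_lt t (lt_of_le_of_ne h1 (huniq t ht.ne))
  have hq_neg : ∀ t, xs < t → q t < 0 := by
    intro t ht
    have h1 : r ≤ h t := hxs ▸ hmono ht.le
    exact hq_of_gt t (lt_of_le_of_ne h1 fun e => huniq t ht.ne' e.symm)
  have hq_ne : ∀ t, t ≠ xs → q t ≠ 0 := by
    intro t ht
    rcases lt_or_gt_of_ne ht with hlt | hgt
    · exact (hq_pos t hlt).ne'
    · exact (hq_neg t hgt).ne
  -- bounds on xs
  have hxs_gt : -a < xs := by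
    by_contra hc
    push_neg at hc
    have := hleft xs hc
    rw [hxs] at this
    exact absurd this.symm (ne_of_lt hres1)
  have hxs_lt : xs < a := by
    by_contra hc
    push_neg at hc
    have := hright xs hc
    rw [hxs] at this
    exact absurd this (ne_of_lt hres2)
  -- the function w
  set w : ℝ → ℝ := fun t => Real.sqrt |q t| with hwdef
  have hw_nonneg : ∀ t, 0 ≤ w t := fun t => Real.sqrt_nonneg _
  have hw_pos : ∀ t, t ≠ xs → 0 < w t := fun t ht =>
    Real.sqrt_pos.2 (abs_pos.2 (hq_ne t ht))
  have hw_cont : Continuous w := by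
    apply Continuous.sqrt
    apply Continuous.abs
    exact (continuous_const.div (hcont.pow 2)
      fun t => pow_ne_zero 2 (hpos t).ne').sub continuous_const
  have hw_int : ∀ u v : ℝ, IntervalIntegrable w MeasureTheory.volume u v :=
    fun u v => hw_cont.intervalIntegrable u v
  -- positivity of integrals of w
  have hint_pos : ∀ u v : ℝ, u < v → 0 < ∫ t in u..v, w t := by
    intro u v huv
    rw [intervalIntegral.integral_of_le huv.le]
    rw [MeasureTheory.setIntegral_pos_iff_support_of_nonneg_ae
      (Filter.Eventually.of_forall fun t => hw_nonneg t)
      ((hw_int u v).1)]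
    have hsub : Set.Ioc u v \ {xs} ⊆ Function.support w ∩ Set.Ioc u v := by
      intro t ⟨ht1, ht2⟩
      exact ⟨(hw_pos t (by simpa using ht2)).ne', ht1⟩
    calc (0 : ENNReal) < ENNReal.ofReal (v - u) := by
            simp [ENNReal.ofReal_pos]; linarith
      _ = MeasureTheory.volume (Set.Ioc u v) := (Real.volume_Ioc).symm
      _ = MeasureTheory.volume (Set.Ioc u v \ {xs}) :=
            (MeasureTheory.measure_diff_null (MeasureTheory.measure_singleton xs)).symm
      _ ≤ _ := MeasureTheory.measure_mono hsub
  -- the primitive Φ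
  set Φ : ℝ → ℝ := fun x => ∫ t in x..xs, w t with hΦdef
  have hΦ_xs : Φ xs = 0 := intervalIntegral.integral_same
  have hΦ_anti : StrictAnti Φ := by
    intro u v huv
    have : Φ v + ∫ t in u..v, w t = Φ u := by
      rw [hΦdef]
      simp only []
      rw [add_comm, ← intervalIntegral.integral_add_adjacent_intervals (hw_int u v) (hw_int v xs)]
    have h2 := hint_pos u v huv
    linarith
  have hΦ_cont : Continuous Φ := by
    have : Continuous fun x => ∫ t in xs..x, w t := by
      rw [continuous_iff_continuousAt]
      intro x
      exact (intervalIntegral.integral_hasDerivAt_right (hw_int xs x)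
        hw_cont.aestronglyMeasurable.stronglyMeasurableAtFilter
        hw_cont.continuousAt).continuousAt
    have heq : Φ = fun x => -∫ t in xs..x, w t := by
      funext x
      exact intervalIntegral.integral_symm xs x
    rw [heq]
    exact this.neg
  -- behavior at -∞
  have hΦ_atBot : Filter.Tendsto Φ Filter.atBot Filter.atTop := by
    set wmin := w (-a) with hwmin
    have hwmin_pos : 0 < wmin := hw_pos _ (ne_of_lt hxs_gt)
    have key : ∀ x ≤ -a, Φ x = (-a - x) * wmin + Φ (-a) := by
      intro x hx
      have h1 : (∫ t in x..(-a), w t) + ∫ t in (-a)..xs, w t = Φ x :=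
        intervalIntegral.integral_add_adjacent_intervals (hw_int x (-a)) (hw_int (-a) xs)
      have h2 : (∫ t in x..(-a), w t) = (-a - x) * wmin := by
        have hcongr : ∀ t ∈ Set.uIcc x (-a), w t = wmin := by
          intro t ht
          rw [Set.uIcc_of_le hx] at ht
          have : h t = h (-a) := by rw [hleft t ht.2, hleft (-a) le_rfl]
          simp only [hwdef, hqdef, this]
          rfl
        rw [intervalIntegral.integral_congr hcongr, intervalIntegral.integral_const,
          smul_eq_mul]
      rw [← h1, h2]
    have htend : Filter.Tendsto (fun x => (-a - x) * wmin + Φ (-a))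
        Filter.atBot Filter.atTop := by
      apply Filter.tendsto_atTop_add_const_right
      apply Filter.Tendsto.atTop_mul_const hwmin_pos
      exact Filter.Tendsto.congr (fun x => by ring)
        (Filter.tendsto_atTop_add_const_left _ (-a) Filter.tendsto_neg_atBot_atTop)
    exact Filter.Tendsto.congr'
      ((Filter.eventually_le_atBot (-a)).mono fun x hx => (key x hx).symm) htend
  -- behavior at +∞
  have hΦ_atTop : Filter.Tendsto Φ Filter.atTop Filter.atBot := by
    set wmax := w a with hwmax
    have hwmax_pos : 0 < wmax := hw_pos _ (ne_of_gt hxs_lt)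
    have key : ∀ x, a ≤ x → Φ x = (a - x) * wmax + Φ a := by
      intro x hx
      have h1 : (∫ t in x..a, w t) + ∫ t in a..xs, w t = Φ x :=
        intervalIntegral.integral_add_adjacent_intervals (hw_int x a) (hw_int a xs)
      have h2 : (∫ t in x..a, w t) = (a - x) * wmax := by
        have hcongr : ∀ t ∈ Set.uIcc x a, w t = wmax := by
          intro t ht
          rw [Set.uIcc_of_ge hx] at ht
          have : h t = h a := by rw [hright t ht.1, hright a le_rfl]
          simp only [hwdef, hqdef, this]
          rfl
        rw [intervalIntegral.integral_congr hcongr, intervalIntegral.integral_const,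
          smul_eq_mul]
      rw [← h1, h2]
    have htend : Filter.Tendsto (fun x => (a - x) * wmax + Φ a)
        Filter.atTop Filter.atBot := by
      apply Filter.tendsto_atBot_add_const_right
      apply Filter.Tendsto.atBot_mul_const hwmax_pos
      exact Filter.Tendsto.congr (fun x => by ring)
        (Filter.tendsto_atBot_add_const_left _ a Filter.tendsto_neg_atTop_atBot)
    exact Filter.Tendsto.congr'
      ((Filter.eventually_ge_atTop a).mono fun x hx => (key x hx).symm) htend
  have hΦ_surj : Function.Surjective Φ := hΦ_cont.surjective' hΦ_atBot hΦ_atTop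
  -- ξ = langerS ∘ Φ
  have hξS : ∀ x, ξ x = langerS (Φ x) := by
    intro x
    rcases le_or_gt x xs with hx | hx
    · rw [hξ x, if_pos hx]
      have hΦ_nonneg : 0 ≤ Φ x :=
        intervalIntegral.integral_nonneg hx fun t _ => hw_nonneg t
      have hcongr : (∫ t in x..xs,
          Real.sqrt ((N : ℝ) ^ 2 * Real.pi ^ 2 / (h t) ^ 2 - k ^ 2)) = Φ x := by
        apply intervalIntegral.integral_congr
        intro t ht
        rw [Set.uIcc_of_le hx] at ht
        have hq_nn : 0 ≤ q t := by
          rcases eq_or_lt_of_le ht.2 with he | hlt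
          · rw [he, hq_xs]
          · exact (hq_pos t hlt).le
        have habs : |q t| = (N : ℝ) ^ 2 * Real.pi ^ 2 / (h t) ^ 2 - k ^ 2 :=
          abs_of_nonneg hq_nn
        show Real.sqrt ((N : ℝ) ^ 2 * Real.pi ^ 2 / (h t) ^ 2 - k ^ 2)
          = Real.sqrt |q t|
        rw [habs]
      rw [hcongr, langerS, if_pos hΦ_nonneg]
    · rw [hξ x, if_neg (not_le.2 hx)]
      have hΦ_neg : Φ x < 0 := hΦ_xs ▸ hΦ_anti hx
      have hcongr : (∫ t in xs..x,
          Real.sqrt (k ^ 2 - (N : ℝ) ^ 2 * Real.pi ^ 2 / (h t) ^ 2)) = -Φ x := by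
        rw [hΦdef]
        simp only []
        rw [← intervalIntegral.integral_symm]
        apply intervalIntegral.integral_congr
        intro t ht
        rw [Set.uIcc_of_le hx.le] at ht
        have hq_np : q t ≤ 0 := by
          rcases eq_or_lt_of_le ht.1 with he | hlt
          · rw [← he, hq_xs]
          · exact (hq_neg t hlt).le
        have habs : |q t| = k ^ 2 - (N : ℝ) ^ 2 * Real.pi ^ 2 / (h t) ^ 2 := by
          rw [abs_of_nonpos hq_np]; simp only [hqdef]; ring
        show Real.sqrt (k ^ 2 - (N : ℝ) ^ 2 * Real.pi ^ 2 / (h t) ^ 2)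
          = Real.sqrt |q t|
        rw [habs]
      rw [hcongr, langerS, if_neg (not_le.2 hΦ_neg)]
  have hξfun : ξ = langerS ∘ Φ := funext hξS
  refine ⟨?_, ?_, ?_, ?_, ?_, ?_⟩
  · rw [hξfun]; exact langerS_continuous.comp hΦ_cont
  · rw [hξfun]; exact langerS_strictMono.comp_strictAnti hΦ_anti
  · rw [hξfun]
    exact ⟨(langerS_strictMono.comp_strictAnti hΦ_anti).injective,
      langerS_surjective.comp hΦ_surj⟩
  · rw [hξS xs, hΦ_xs, langerS_zero]
  · intro x hx
    rw [hξS x]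
    have : 0 < Φ x := hΦ_xs ▸ hΦ_anti hx
    calc (0:ℝ) = langerS 0 := langerS_zero.symm
      _ < langerS (Φ x) := langerS_strictMono this
  · intro x hx
    rw [hξS x]
    have : Φ x < 0 := hΦ_xs ▸ hΦ_anti hx
    calc langerS (Φ x) < langerS 0 := langerS_strictMono this
      _ = 0 := langerS_zero
end

section
/- Let 0 < h_min < h_max, a > 0, and let h : ℝ → ℝ be continuously differentiable and nondecreasing with h(x) = h_min for x ≤ −a and h(x) = h_max for x ≥ a. Let k > 0 and N ∈ ℕ with h_min < Nπ/k < h_max, let x* ∈ ℝ satisfy h(x*) = Nπ/k, and assume h(x) ≠ Nπ/k for every x ≠ x*. Define ξ : ℝ → ℝ by ξ(x) = ( (3/2)·∫ₓ^{x*} √(N²π²/h(t)² − k²) dt )^{2/3} for x ≤ x*, and ξ(x) = −( (3/2)·∫_{x*}^{x} √(k² − N²π²/h(t)²) dt )^{2/3} for x > x*. Then ξ is differentiable at every x ≠ x*, with ξ'(x) < 0, and satisfies the identity ξ(x)·ξ'(x)² = N²π²/h(x)² − k² for all x ≠ x*. -/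
/-!
Write `g = N²π²/h² − k²`; by monotonicity and uniqueness of `x*`, `g > 0` left of `x*` and
`g < 0` right of it. On each side `ξ = ±((3/2) F)^(2/3)` with `F > 0` and `F' = ∓√|g|`, so the
chain rule gives `ξ' = -((3/2) F)^(-1/3) √|g| < 0`, and since
`((3/2) F)^(2/3) ((3/2) F)^(-2/3) = 1` we get `ξ ξ'² = ±|g| = g`, the sign of `ξ` being that of `g`.
-/

open Real intervalIntegral Filter Topology Set

section LangerTransform

variable {F : ℝ → ℝ} {x F' : ℝ}

theorem hasDerivAt_langer_rpow (hF : HasDerivAt F F' x) (hpos : 0 < F x) :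
    HasDerivAt (fun u => ((3 / 2) * F u) ^ ((2 : ℝ) / 3))
      (((3 / 2) * F x) ^ (-(1 : ℝ) / 3) * F') x := by
  have hc : (3 / 2) * F x ≠ 0 := by positivity
  refine ((hF.const_mul (3 / 2)).rpow_const (p := (2 : ℝ) / 3) (Or.inl hc)).congr_deriv ?_
  norm_num
  ring

theorem rpow_two_thirds_mul_sq_rpow_neg_one_third {c : ℝ} (hc : 0 < c) (d : ℝ) :
    c ^ ((2 : ℝ) / 3) * (c ^ (-(1 : ℝ) / 3) * d) ^ 2 = d ^ 2 := by
  have hcube : c ^ ((2 : ℝ) / 3) * (c ^ (-(1 : ℝ) / 3)) ^ 2 = 1 := by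
    rw [← rpow_natCast (c ^ (-(1 : ℝ) / 3)) 2, ← rpow_mul hc.le, ← rpow_add hc]
    norm_num
  linear_combination d ^ 2 * hcube

end LangerTransform

section LangerBranches

variable {p : ℝ → ℝ} {xs x : ℝ}

theorem langer_left_branch (hp : Continuous p) (hpos : ∀ t ∈ Ico x xs, 0 < p t)
    (hx : x < xs) :
    ∃ d < 0, HasDerivAt (fun u => ((3 / 2) * ∫ t in u..xs, √(p t)) ^ ((2 : ℝ) / 3)) d x ∧
      ((3 / 2) * ∫ t in x..xs, √(p t)) ^ ((2 : ℝ) / 3) * d ^ 2 = p x := by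
  have hsqrt : Continuous fun t => √(p t) := hp.sqrt
  have hpx : 0 < √(p x) := sqrt_pos.mpr (hpos x ⟨le_rfl, hx⟩)
  have hF : HasDerivAt (fun u => ∫ t in u..xs, √(p t)) (-√(p x)) x :=
    integral_hasDerivAt_left (hsqrt.intervalIntegrable x xs)
      hsqrt.stronglyMeasurable.stronglyMeasurableAtFilter hsqrt.continuousAt
  have hFpos : 0 < ∫ t in x..xs, √(p t) :=
    intervalIntegral_pos_of_pos_on (hsqrt.intervalIntegrable x xs)
      (fun t ht => sqrt_pos.mpr (hpos t (Ioo_subset_Ico_self ht))) hx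
  have hc : 0 < (3 / 2) * ∫ t in x..xs, √(p t) := by positivity
  refine ⟨_, ?_, hasDerivAt_langer_rpow hF hFpos, ?_⟩
  · exact mul_neg_of_pos_of_neg (rpow_pos_of_pos hc _) (neg_neg_of_pos hpx)
  · rw [rpow_two_thirds_mul_sq_rpow_neg_one_third hc, neg_sq, sq_sqrt (hpos x ⟨le_rfl, hx⟩).le]

theorem langer_right_branch (hp : Continuous p) (hpos : ∀ t ∈ Ioc xs x, 0 < p t)
    (hx : xs < x) :
    ∃ d < 0, HasDerivAt (fun u => -((3 / 2) * ∫ t in xs..u, √(p t)) ^ ((2 : ℝ) / 3)) d x ∧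
      -((3 / 2) * ∫ t in xs..x, √(p t)) ^ ((2 : ℝ) / 3) * d ^ 2 = -p x := by
  have hsqrt : Continuous fun t => √(p t) := hp.sqrt
  have hpx : 0 < √(p x) := sqrt_pos.mpr (hpos x ⟨hx, le_rfl⟩)
  have hF : HasDerivAt (fun u => ∫ t in xs..u, √(p t)) (√(p x)) x :=
    integral_hasDerivAt_right (hsqrt.intervalIntegrable xs x)
      hsqrt.stronglyMeasurable.stronglyMeasurableAtFilter hsqrt.continuousAt
  have hFpos : 0 < ∫ t in xs..x, √(p t) :=
    intervalIntegral_pos_of_pos_on (hsqrt.intervalIntegrable xs x)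
      (fun t ht => sqrt_pos.mpr (hpos t (Ioo_subset_Ioc_self ht))) hx
  have hc : 0 < (3 / 2) * ∫ t in xs..x, √(p t) := by positivity
  refine ⟨_, ?_, (hasDerivAt_langer_rpow hF hFpos).neg, ?_⟩
  · exact neg_neg_of_pos (mul_pos (rpow_pos_of_pos hc _) hpx)
  · rw [neg_mul, neg_sq, rpow_two_thirds_mul_sq_rpow_neg_one_third hc,
      sq_sqrt (hpos x ⟨hx, le_rfl⟩).le]

end LangerBranches

theorem differentiableAt_deriv_neg_mul_deriv_sq_of_eventuallyEq {ξ φ : ℝ → ℝ} {x r : ℝ}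
    (heq : ξ =ᶠ[𝓝 x] φ) (hφ : ∃ d < 0, HasDerivAt φ d x ∧ φ x * d ^ 2 = r) :
    DifferentiableAt ℝ ξ x ∧ deriv ξ x < 0 ∧ ξ x * deriv ξ x ^ 2 = r := by
  obtain ⟨d, hd, hφd, hr⟩ := hφ
  have hξd : HasDerivAt ξ d x := hφd.congr_of_eventuallyEq heq
  exact ⟨hξd.differentiableAt, hξd.deriv ▸ hd, by rw [hξd.deriv, heq.eq_of_nhds, hr]⟩

theorem sq_div_sq_sub_sq_pos_of_lt_div {c k y : ℝ} (hk : 0 < k) (hy : 0 < y)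
    (h : y < c / k) : 0 < c ^ 2 / y ^ 2 - k ^ 2 := by
  have hky : k < c / y := by
    rw [lt_div_iff₀ hy, mul_comm]
    exact (lt_div_iff₀ hk).mp h
  rw [sub_pos, ← div_pow]
  exact pow_lt_pow_left₀ hky hk.le two_ne_zero

theorem sq_sub_sq_div_sq_pos_of_div_lt {c k y : ℝ} (hk : 0 < k) (hc : 0 ≤ c)
    (h : c / k < y) : 0 < k ^ 2 - c ^ 2 / y ^ 2 := by
  have hy : 0 < y := (div_nonneg hc hk.le).trans_lt h
  have hyk : c / y < k := by
    rw [div_lt_iff₀ hy, mul_comm]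
    exact (div_lt_iff₀ hk).mp h
  rw [sub_pos, ← div_pow]
  exact pow_lt_pow_left₀ hyk (div_nonneg hc hy.le) two_ne_zero

theorem langer_variable_identity_general
    (hmin a k : ℝ) (N : ℕ) (h : ℝ → ℝ) (xs : ℝ)
    (hmin_pos : 0 < hmin) (hk : 0 < k)
    (hsmooth : ContDiff ℝ 1 h) (hmono : Monotone h)
    (hleft : ∀ x ≤ -a, h x = hmin)
    (hxs : h xs = N * Real.pi / k)
    (huniq : ∀ x, x ≠ xs → h x ≠ N * Real.pi / k)
    (ξ : ℝ → ℝ)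
    (hξ : ∀ x, ξ x =
      if x ≤ xs then
        ((3 / 2) * ∫ t in x..xs,
            Real.sqrt ((N : ℝ) ^ 2 * Real.pi ^ 2 / (h t) ^ 2 - k ^ 2)) ^ ((2 : ℝ) / 3)
      else
        -(((3 / 2) * ∫ t in xs..x,
            Real.sqrt (k ^ 2 - (N : ℝ) ^ 2 * Real.pi ^ 2 / (h t) ^ 2)) ^ ((2 : ℝ) / 3))) :
    ∀ x : ℝ, x ≠ xs →
      DifferentiableAt ℝ ξ x ∧ deriv ξ x < 0 ∧
        ξ x * (deriv ξ x) ^ 2 = (N : ℝ) ^ 2 * Real.pi ^ 2 / (h x) ^ 2 - k ^ 2 := by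
  intro x hx
  have hpos : ∀ t, 0 < h t := fun t =>
    hmin_pos.trans_le ((hleft _ (min_le_right t (-a))).symm.trans_le (hmono (min_le_left _ _)))
  have hbelow : ∀ t < xs, h t < N * π / k := fun t ht =>
    hxs ▸ (hmono ht.le).lt_of_ne (hxs ▸ huniq t ht.ne)
  have habove : ∀ t, xs < t → N * π / k < h t := fun t ht =>
    hxs ▸ (hmono ht.le).lt_of_ne' (hxs ▸ huniq t ht.ne')
  simp only [← mul_pow] at hξ ⊢
  have hcont : Continuous fun t => ((N : ℝ) * π) ^ 2 / h t ^ 2 := continuous_const.div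
    (hsmooth.continuous.pow 2) fun t => pow_ne_zero 2 (hpos t).ne'
  rcases hx.lt_or_gt with hlt | hgt
  · have hleft_branch := langer_left_branch
      (p := fun t => ((N : ℝ) * π) ^ 2 / h t ^ 2 - k ^ 2) (hcont.sub continuous_const)
      (fun t ht => sq_div_sq_sub_sq_pos_of_lt_div hk (hpos t) (hbelow t ht.2)) hlt
    refine differentiableAt_deriv_neg_mul_deriv_sq_of_eventuallyEq ?_ hleft_branch
    filter_upwards [Iio_mem_nhds hlt] with u hu
    rw [hξ u, if_pos hu.le]
  · have hright_branch := langer_right_branch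
      (p := fun t => k ^ 2 - ((N : ℝ) * π) ^ 2 / h t ^ 2) (continuous_const.sub hcont)
      (fun t ht => sq_sub_sq_div_sq_pos_of_div_lt hk (by positivity) (habove t ht.1)) hgt
    rw [neg_sub] at hright_branch
    refine differentiableAt_deriv_neg_mul_deriv_sq_of_eventuallyEq ?_ hright_branch
    filter_upwards [Ioi_mem_nhds hgt] with u hu
    rw [hξ u, if_neg (not_le.mpr hu)]

/-- Away from the resonant point `x*`, the Langer variable `ξ` is differentiable with
negative derivative, and satisfies the defining identity
`ξ(x)·ξ'(x)² = N²π²/h(x)² − k²`. -/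
theorem langer_variable_identity
    (hmin hmax a k : ℝ) (N : ℕ) (h : ℝ → ℝ) (xs : ℝ)
    (hmin_pos : 0 < hmin) (hminmax : hmin < hmax) (ha : 0 < a) (hk : 0 < k)
    (hsmooth : ContDiff ℝ 1 h) (hmono : Monotone h)
    (hleft : ∀ x ≤ -a, h x = hmin) (hright : ∀ x, a ≤ x → h x = hmax)
    (hres1 : hmin < N * Real.pi / k) (hres2 : N * Real.pi / k < hmax)
    (hxs : h xs = N * Real.pi / k)
    (huniq : ∀ x, x ≠ xs → h x ≠ N * Real.pi / k)
    (ξ : ℝ → ℝ)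
    (hξ : ∀ x, ξ x =
      if x ≤ xs then
        ((3 / 2) * ∫ t in x..xs,
            Real.sqrt ((N : ℝ) ^ 2 * Real.pi ^ 2 / (h t) ^ 2 - k ^ 2)) ^ ((2 : ℝ) / 3)
      else
        -(((3 / 2) * ∫ t in xs..x,
            Real.sqrt (k ^ 2 - (N : ℝ) ^ 2 * Real.pi ^ 2 / (h t) ^ 2)) ^ ((2 : ℝ) / 3))) :
    ∀ x : ℝ, x ≠ xs →
      DifferentiableAt ℝ ξ x ∧ deriv ξ x < 0 ∧
        ξ x * (deriv ξ x) ^ 2 = (N : ℝ) ^ 2 * Real.pi ^ 2 / (h x) ^ 2 - k ^ 2 :=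
  langer_variable_identity_general hmin a k N h xs hmin_pos hk hsmooth hmono hleft hxs huniq ξ hξ
end

section
/- Let a, b : ℝ → ℂ be differentiable functions satisfying the Wronskian identity a(ζ)·b'(ζ) − a'(ζ)·b(ζ) = 1/π for all ζ ∈ ℝ. Let φ₁, φ₂ : ℝ → ℂ and ξ₁, ξ₂ : ℝ → ℝ be differentiable, and let s, t ∈ ℝ. Let M be the 4×4 matrix with rows: row 1 = (−φ₁(t)·a(ξ₁(t)), φ₂(t)·a(ξ₂(t)), φ₂(t)·b(ξ₂(t)), 0); row 2 = (−(φ₁·(a∘ξ₁))'(t), (φ₂·(a∘ξ₂))'(t), (φ₂·(b∘ξ₂))'(t), 0); row 3 = (0, −a(ξ₂(s)), −b(ξ₂(s)), a(ξ₂(s))); row 4 = (0, −(a∘ξ₂)'(s), −(b∘ξ₂)'(s), (a∘ξ₂)'(s)). Then det M = (ξ₂'(s)/π)·( (φ₁·(a∘ξ₁))'(t)·φ₂(t)·a(ξ₂(t)) − φ₁(t)·a(ξ₁(t))·(φ₂·(a∘ξ₂))'(t) ). -/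
open Real Matrix

/-- Determinant of the 4×4 matching matrix `M(s,t)` for the connection coefficients of
the approximate Green function in a dilated waveguide, for any pair `(a,b)` of
differentiable functions with constant Wronskian `a b' − a' b = 1/π` (e.g. the Airy
functions `𝒜, 𝓑`). -/
theorem matching_matrix_det
    (a b φ₁ φ₂ : ℝ → ℂ) (ξ₁ ξ₂ : ℝ → ℝ) (s t : ℝ)
    (ha : Differentiable ℝ a) (hb : Differentiable ℝ b)
    (hφ₁ : Differentiable ℝ φ₁) (hφ₂ : Differentiable ℝ φ₂)
    (hξ₁ : Differentiable ℝ ξ₁) (hξ₂ : Differentiable ℝ ξ₂)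
    (hwronskian : ∀ ζ : ℝ, a ζ * deriv b ζ - deriv a ζ * b ζ = 1 / (Real.pi : ℂ)) :
    (Matrix.det
      !![-(φ₁ t * a (ξ₁ t)), φ₂ t * a (ξ₂ t), φ₂ t * b (ξ₂ t), 0;
         -(deriv (fun x => φ₁ x * a (ξ₁ x)) t),
           deriv (fun x => φ₂ x * a (ξ₂ x)) t,
           deriv (fun x => φ₂ x * b (ξ₂ x)) t, 0;
         0, -(a (ξ₂ s)), -(b (ξ₂ s)), a (ξ₂ s);
         0, -(deriv (fun x => a (ξ₂ x)) s),
           -(deriv (fun x => b (ξ₂ x)) s),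
           deriv (fun x => a (ξ₂ x)) s])
    = ((deriv ξ₂ s : ℝ) : ℂ) / (Real.pi : ℂ) *
        (deriv (fun x => φ₁ x * a (ξ₁ x)) t * (φ₂ t * a (ξ₂ t))
          - φ₁ t * a (ξ₁ t) * deriv (fun x => φ₂ x * a (ξ₂ x)) t) := by
  have hda : deriv (fun x => a (ξ₂ x)) s = ((deriv ξ₂ s : ℝ) : ℂ) * deriv a (ξ₂ s) := by
    have := deriv.scomp s (ha.differentiableAt (x := ξ₂ s)) (hξ₂.differentiableAt (x := s))
    simpa [Function.comp_def, smul_eq_mul, Complex.real_smul] using this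
  have hdb : deriv (fun x => b (ξ₂ x)) s = ((deriv ξ₂ s : ℝ) : ℂ) * deriv b (ξ₂ s) := by
    have := deriv.scomp s (hb.differentiableAt (x := ξ₂ s)) (hξ₂.differentiableAt (x := s))
    simpa [Function.comp_def, smul_eq_mul, Complex.real_smul] using this
  rw [hda, hdb]
  simp [Matrix.det_succ_row_zero, Fin.sum_univ_succ, Fin.succAbove]
  have hπ : (Real.pi : ℂ) ≠ 0 := by
    exact_mod_cast Real.pi_ne_zero
  linear_combination (((deriv ξ₂ s : ℝ) : ℂ) *
    (-(φ₁ t * a (ξ₁ t)) * deriv (fun x => φ₂ x * a (ξ₂ x)) t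
      - φ₂ t * a (ξ₂ t) * -(deriv (fun x => φ₁ x * a (ξ₁ x)) t))) * hwronskian (ξ₂ s)
end
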